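/- Fix n ∈ ℕ, let F_0(x) = [[1,1],[1,1−(n+2)x]], A_1(x) = [[2−(n+4)x, 0],[0, 2−(n+3)x]], A_0(x) = (1/x)·[[−1, 1−x],[1, −1+x]], and define the constant matrices C = (1/(n+2))·[[2n+5, −1],[−2n−3, 4n+7]], U = [[n+4, 0],[−1, n+5]], V = [[0, 0],[0, n+2]]. Then for all x ∈ (0,1) the following two identities hold: 2x(1−x)·F_0'(x) + F_0(x)·A_1(x) = (C − xU)·F_0(x) and x(1−x)·F_0''(x) + F_0'(x)·A_1(x) + F_0(x)·A_0(x) = −V·F_0(x). (Equivalently, the conjugated operator F_0 D F_0^{−1}, where QD = Q''·x(1−x) + Q'·A_1 + Q·A_0, equals the hypergeometric operator ∂²x(1−x) + ∂(C − xU) − V.) -/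

import Mathlib

open scoped Matrix

/-- The matrix function `F_0(x)`. -/
noncomputable def F0mat (n : ℕ) (x : ℝ) : Matrix (Fin 2) (Fin 2) ℂ :=
  !![1, 1; 1, 1 - ((n : ℂ) + 2) * (x : ℂ)]

/-- The entrywise derivative of `F_0`. -/
noncomputable def F0mat' (n : ℕ) (x : ℝ) : Matrix (Fin 2) (Fin 2) ℂ :=
  Matrix.of fun i j => deriv (fun t : ℝ => F0mat n t i j) x

/-- The entrywise second derivative of `F_0`. -/
noncomputable def F0mat'' (n : ℕ) (x : ℝ) : Matrix (Fin 2) (Fin 2) ℂ :=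
  Matrix.of fun i j => deriv (fun t : ℝ => F0mat' n t i j) x

lemma deriv_const_sub_mul_ofReal (a b : ℂ) (x : ℝ) :
    deriv (fun t : ℝ => a - b * (t : ℂ)) x = -b := by
  have h : HasDerivAt (fun t : ℝ => a - b * (t : ℂ)) (-(b * 1)) x :=
    ((Complex.ofRealCLM.hasDerivAt (x := x)).const_mul b).const_sub a
  simpa using h.deriv

lemma F0mat'_eq (n : ℕ) (x : ℝ) : F0mat' n x = !![0, 0; 0, -((n : ℂ) + 2)] := by
  ext i j
  fin_cases i <;> fin_cases j <;> simp [F0mat', F0mat, deriv_const_sub_mul_ofReal]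

lemma F0mat''_eq (n : ℕ) (x : ℝ) : F0mat'' n x = 0 := by
  ext i j
  simp [F0mat'', F0mat'_eq]

lemma first_order_conjugation_identity (c x : ℂ) (hc : c + 2 ≠ 0) :
    (2 * x * (1 - x)) • !![0, 0; 0, -(c + 2)] +
        !![1, 1; 1, 1 - (c + 2) * x] * !![2 - (c + 4) * x, 0; 0, 2 - (c + 3) * x] =
      ((1 / (c + 2)) • !![2 * c + 5, -1; -2 * c - 3, 4 * c + 7] -
          x • !![c + 4, 0; -1, c + 5]) * !![1, 1; 1, 1 - (c + 2) * x] := by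
  ext i j
  fin_cases i <;> fin_cases j <;> simp <;> field_simp <;> ring

lemma second_order_conjugation_identity (c x : ℂ) (hx : x ≠ 0) :
    !![0, 0; 0, -(c + 2)] * !![2 - (c + 4) * x, 0; 0, 2 - (c + 3) * x] +
        !![1, 1; 1, 1 - (c + 2) * x] * ((1 / x) • !![-1, 1 - x; 1, -1 + x]) =
      -(!![0, 0; 0, c + 2] * !![1, 1; 1, 1 - (c + 2) * x]) := by
  ext i j
  fin_cases i <;> fin_cases j <;> simp <;> field_simp <;> ring

/-- with `A₁(x) = diag(2-(n+4)x, 2-(n+3)x)`,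
`A₀(x) = (1/x)[[-1, 1-x],[1, -1+x]]`, and the constant matrices
`C = (1/(n+2))[[2n+5, -1],[-2n-3, 4n+7]]`, `U = [[n+4, 0],[-1, n+5]]`,
`V = [[0,0],[0, n+2]]`, the function `F_0` satisfies
`2x(1-x) F_0' + F_0 A₁ = (C - xU) F_0` and
`x(1-x) F_0'' + F_0' A₁ + F_0 A₀ = -V F_0` on `(0,1)`; i.e.
`F₀ D F₀⁻¹ = ∂² x(1-x) + ∂ (C - xU) - V`. -/
theorem F0mat_conjugation_equations (n : ℕ) :
    ∀ x ∈ Set.Ioo (0 : ℝ) 1,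
      (2 * (x : ℂ) * (1 - (x : ℂ))) • F0mat' n x +
          F0mat n x * !![2 - ((n : ℂ) + 4) * (x : ℂ), 0;
                         0, 2 - ((n : ℂ) + 3) * (x : ℂ)] =
        ((1 / ((n : ℂ) + 2)) • !![2 * (n : ℂ) + 5, -1; -2 * (n : ℂ) - 3, 4 * (n : ℂ) + 7] -
            (x : ℂ) • !![(n : ℂ) + 4, 0; -1, (n : ℂ) + 5]) * F0mat n x ∧
      ((x : ℂ) * (1 - (x : ℂ))) • F0mat'' n x +
          F0mat' n x * !![2 - ((n : ℂ) + 4) * (x : ℂ), 0;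
                          0, 2 - ((n : ℂ) + 3) * (x : ℂ)] +
          F0mat n x * ((1 / (x : ℂ)) • !![-1, 1 - (x : ℂ); 1, -1 + (x : ℂ)]) =
        -(!![0, 0; 0, (n : ℂ) + 2] * F0mat n x) := by
  intro x hx
  have hn : (n : ℂ) + 2 ≠ 0 := by exact_mod_cast (n + 1).succ_ne_zero
  have hx0 : (x : ℂ) ≠ 0 := Complex.ofReal_ne_zero.mpr hx.1.ne'
  rw [F0mat'_eq, F0mat''_eq, smul_zero, zero_add, F0mat]
  exact ⟨first_order_conjugation_identity _ _ hn, second_order_conjugation_identity _ _ hx0⟩
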